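/- Let A be a set of n agents, each with a nonnegative monotone submodular valuation v_i on a finite ground set G with v_i(∅) = 0, and let V_i be the multilinear extension of v_i. Let H ⊆ G with |H| = n, G' = G ∖ H, and A' = {i ∈ A : v_i(G') > 0}. Let (H*_i)_{i∈A} be a partition of H, let y* ∈ [0,1]^{A×G} satisfy y*_{ij} = 0 for j ∈ H and ∑_{i∈A} y*_{ij} ≤ 1 for each j ∈ G', and set x*_i = y*_i + 1_{H*_i}. Let β > 0 and let y' ∈ [0,1]^{A×G} satisfy y'_{ij} = 0 for j ∈ H, ∑_{i∈A} y'_{ij} ≤ 1 for each j ∈ G', y'_i = 0 for every i ∉ A', V_i(y'_i) > 0 for every i ∈ A', and (1/n) ∑_{i∈A'} V_i(y*_i)/V_i(y'_i) ≤ β. Then there exists an injection π : A → H such that (∏_{i∈A} V_i(y'_i + 1_{π(i)}))^{1/n} ≥ (1/(β+1)) · (∏_{i∈A} V_i(x*_i))^{1/n}. -/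

import Mathlib

open Finset
open scoped Classical

/-- A set function `v` on a finite ground set is submodular if
`v(S ∩ T) + v(S ∪ T) ≤ v(S) + v(T)` for all `S, T`. -/
def Submodular {G : Type*} [DecidableEq G] (v : Finset G → ℝ) : Prop :=
  ∀ S T : Finset G, v (S ∩ T) + v (S ∪ T) ≤ v S + v T

/-- The multilinear extension of a set function `v` on a finite ground set `G`. -/
noncomputable def multilinear {G : Type*} [Fintype G] [DecidableEq G]
    (v : Finset G → ℝ) (x : G → ℝ) : ℝ :=
  ∑ S : Finset G, v S * ((∏ j ∈ S, x j) * ∏ j ∈ Sᶜ, (1 - x j))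

/-- The indicator vector of a finite set `S`. -/
def indVec {G : Type*} [DecidableEq G] (S : Finset G) : G → ℝ :=
  fun j => if j ∈ S then 1 else 0

/-!
Put `b_i = V_i(y*_i) / V_i(y'_i)` (and `b_i = 0` outside `A'`) and `d_i = b_i + |H*_i|`.
Submodularity and monotonicity give, for every `j ∈ H`,
`V_i(x*_i) ≤ b_i V_i(y'_i + 1_j) + ∑_{k ∈ H*_i} V_i(y'_i + 1_k)`. Hence for the threshold
`c_i = V_i(x*_i) / d_i` either some `k ∈ H*_i` has `V_i(y'_i + 1_k) ≥ c_i`, or every `j ∈ H` does;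
as the `H*_i` are disjoint, Hall's condition holds and there is a matching `π` with
`V_i(x*_i) ≤ d_i V_i(y'_i + 1_{π i})`. Finally `∑ d_i ≤ n (β + 1)`, and AM-GM bounds the geometric
mean of the `d_i` by `β + 1`.
-/

open Function

section IndicatorVector

variable {G : Type*} [DecidableEq G]

lemma indVec_nonneg_le_one (S : Finset G) (j : G) : 0 ≤ indVec S j ∧ indVec S j ≤ 1 := by
  unfold indVec; split_ifs <;> norm_num

lemma add_indVec_nonneg_le_one {x : G → ℝ} (hx : ∀ j, 0 ≤ x j ∧ x j ≤ 1) {S : Finset G}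
    (hxS : ∀ k ∈ S, x k = 0) (j : G) : 0 ≤ (x + indVec S) j ∧ (x + indVec S) j ≤ 1 := by
  by_cases hj : j ∈ S <;> simp [indVec, hj, hxS, hx j]

lemma add_indVec_eq_piecewise {x : G → ℝ} {S : Finset G} (hxS : ∀ k ∈ S, x k = 0) :
    x + indVec S = S.piecewise (1 : G → ℝ) x := by
  ext j; by_cases hj : j ∈ S <;> simp [indVec, hj, hxS]

end IndicatorVector

section MultilinearExtension

variable {G : Type*} [Fintype G] [DecidableEq G] {v : Finset G → ℝ}

lemma multilinear_nonneg (hv : ∀ S, 0 ≤ v S) {x : G → ℝ} (hx : ∀ j, 0 ≤ x j ∧ x j ≤ 1) :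
    0 ≤ multilinear v x :=
  sum_nonneg fun S _ => mul_nonneg (hv S) <|
    mul_nonneg (prod_nonneg fun j _ => (hx j).1) (prod_nonneg fun j _ => sub_nonneg.2 (hx j).2)

lemma multilinear_indVec (v : Finset G → ℝ) (S : Finset G) : multilinear v (indVec S) = v S := by
  rw [multilinear, sum_eq_single_of_mem S (mem_univ S)]
  · rw [prod_eq_one fun j hj => by simp [indVec, hj],
      prod_eq_one fun j hj => by simp [indVec, mem_compl.1 hj]]
    ring
  · intro T _ hTS
    by_cases hTS' : T ⊆ S
    · obtain ⟨j, hjS, hjT⟩ := exists_of_ssubset (hTS'.ssubset_of_ne hTS)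
      rw [prod_eq_zero (mem_compl.2 hjT) (by simp [indVec, hjS]), mul_zero, mul_zero]
    · obtain ⟨j, hjT, hjS⟩ := not_subset.1 hTS'
      rw [prod_eq_zero hjT (by simp [indVec, hjS]), zero_mul, mul_zero]

/-- The probability of `S ⊆ G ∖ {j}` under the product distribution `x` on the coordinates
other than `j`. -/
noncomputable def pivotWeight (x : G → ℝ) (j : G) (S : Finset G) : ℝ :=
  (∏ k ∈ S, x k) * ∏ k ∈ univ.erase j \ S, (1 - x k)

lemma multilinear_eq_sum_pivotWeight (v : Finset G → ℝ) (x : G → ℝ) (j : G) :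
    multilinear v x = ∑ S ∈ (univ.erase j).powerset,
      ((1 - x j) * v S + x j * v (insert j S)) * pivotWeight x j S := by
  have hsplit := sum_powerset_insert (notMem_erase j univ)
    (f := fun S => v S * ((∏ k ∈ S, x k) * ∏ k ∈ Sᶜ, (1 - x k)))
  rw [insert_erase (mem_univ j), powerset_univ] at hsplit
  rw [multilinear, hsplit, ← sum_add_distrib]
  refine sum_congr rfl fun S hS => ?_
  have hjS : j ∉ S := notMem_of_mem_powerset_of_notMem hS (notMem_erase j univ)
  have hcompl : Sᶜ = insert j (univ.erase j \ S) := by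
    ext k; by_cases hk : k = j <;> simp [hk, hjS]
  have hcompl' : (insert j S)ᶜ = univ.erase j \ S := by
    ext k; by_cases hk : k = j <;> simp [hk]
  rw [hcompl, hcompl', prod_insert (by simp), prod_insert hjS, pivotWeight]
  ring

lemma pivotWeight_update (x : G → ℝ) (j : G) (t : ℝ) {S : Finset G}
    (hS : S ∈ (univ.erase j).powerset) : pivotWeight (update x j t) j S = pivotWeight x j S := by
  have hjS : j ∉ S := notMem_of_mem_powerset_of_notMem hS (notMem_erase j univ)
  unfold pivotWeight
  congr 1
  · exact prod_congr rfl fun k hk => update_of_ne (ne_of_mem_of_not_mem hk hjS) _ _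
  · refine prod_congr rfl fun k hk => ?_
    rw [update_of_ne (mem_erase.1 (mem_sdiff.1 hk).1).1]

lemma sum_pivotWeight (x : G → ℝ) (j : G) :
    ∑ S ∈ (univ.erase j).powerset, pivotWeight x j S = 1 := by
  simp only [pivotWeight, ← prod_add, add_sub_cancel, prod_const_one]

lemma pivotWeight_nonneg {x : G → ℝ} (hx : ∀ j, 0 ≤ x j ∧ x j ≤ 1) (j : G) (S : Finset G) :
    0 ≤ pivotWeight x j S :=
  mul_nonneg (prod_nonneg fun k _ => (hx k).1) (prod_nonneg fun k _ => sub_nonneg.2 (hx k).2)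

/-- The partial derivative `∂V/∂x_j`; it does not depend on `x j`. -/
noncomputable def multilinearDeriv (v : Finset G → ℝ) (x : G → ℝ) (j : G) : ℝ :=
  ∑ S ∈ (univ.erase j).powerset, (v (insert j S) - v S) * pivotWeight x j S

lemma multilinear_update (v : Finset G → ℝ) (x : G → ℝ) (j : G) (t : ℝ) :
    multilinear v (update x j t) = multilinear v (update x j 0) + t * multilinearDeriv v x j := by
  rw [multilinear_eq_sum_pivotWeight _ _ j, multilinear_eq_sum_pivotWeight _ (update x j 0) j,
    multilinearDeriv, mul_sum, ← sum_add_distrib]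
  refine sum_congr rfl fun S hS => ?_
  rw [pivotWeight_update _ _ _ hS, pivotWeight_update _ _ _ hS]
  simp only [update_self]
  ring

lemma multilinearDeriv_nonneg (hv : Monotone v) {x : G → ℝ} (hx : ∀ j, 0 ≤ x j ∧ x j ≤ 1)
    (j : G) : 0 ≤ multilinearDeriv v x j :=
  sum_nonneg fun S _ =>
    mul_nonneg (sub_nonneg.2 (hv (subset_insert j S))) (pivotWeight_nonneg hx j S)

lemma multilinearDeriv_le (hv : Submodular v) {x : G → ℝ} (hx : ∀ j, 0 ≤ x j ∧ x j ≤ 1)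
    (j : G) : multilinearDeriv v x j ≤ v {j} - v ∅ := by
  calc multilinearDeriv v x j
      ≤ ∑ S ∈ (univ.erase j).powerset, (v {j} - v ∅) * pivotWeight x j S := by
        refine sum_le_sum fun S hS => mul_le_mul_of_nonneg_right ?_ (pivotWeight_nonneg hx j S)
        have hjS : j ∉ S := notMem_of_mem_powerset_of_notMem hS (notMem_erase j univ)
        have := hv S {j}
        rw [inter_singleton_of_notMem hjS, union_singleton] at this
        linarith
    _ = v {j} - v ∅ := by rw [← mul_sum, sum_pivotWeight, mul_one]

lemma multilinear_le_update (hv : Monotone v) {x : G → ℝ} (hx : ∀ j, 0 ≤ x j ∧ x j ≤ 1)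
    {j : G} {t : ℝ} (ht : x j ≤ t) : multilinear v x ≤ multilinear v (update x j t) := by
  conv_lhs => rw [← update_eq_self j x, multilinear_update]
  rw [multilinear_update v x j t]
  linarith [mul_le_mul_of_nonneg_right ht (multilinearDeriv_nonneg hv hx j)]

lemma multilinear_mono (hv : Monotone v) {x y : G → ℝ} (hx : ∀ j, 0 ≤ x j ∧ x j ≤ 1)
    (hy : ∀ j, 0 ≤ y j ∧ y j ≤ 1) (hxy : x ≤ y) : multilinear v x ≤ multilinear v y := by
  suffices ∀ s : Finset G, multilinear v x ≤ multilinear v (s.piecewise y x) by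
    simpa using this univ
  intro s
  induction s using Finset.induction_on with
  | empty => simp
  | insert a s ha ih =>
    rw [piecewise_insert]
    refine ih.trans (multilinear_le_update hv (fun j => ?_) ?_)
    · by_cases hj : j ∈ s <;> simp [hj, hx j, hy j]
    · simpa [ha] using hxy a

lemma multilinear_piecewise_one_le (hv : Submodular v) {x : G → ℝ}
    (hx : ∀ j, 0 ≤ x j ∧ x j ≤ 1) {S : Finset G} (hxS : ∀ k ∈ S, x k = 0) :
    multilinear v (S.piecewise (1 : G → ℝ) x) ≤ multilinear v x + ∑ k ∈ S, (v {k} - v ∅) := by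
  induction S using Finset.induction_on with
  | empty => simp
  | insert a S ha ih =>
    set z := S.piecewise (1 : G → ℝ) x
    have hz : ∀ j, 0 ≤ z j ∧ z j ≤ 1 := fun j => by
      by_cases hj : j ∈ S <;> simp [z, hj, hx j]
    have hza : z a = 0 := by simp [z, ha, hxS a (mem_insert_self a S)]
    have hstep : multilinear v (update z a 1) ≤ multilinear v z + (v {a} - v ∅) := by
      rw [multilinear_update, ← hza, update_eq_self]
      nlinarith [multilinearDeriv_le hv hz a]
    rw [piecewise_insert, Pi.one_apply, sum_insert ha]
    linarith [ih fun k hk => hxS k (mem_insert_of_mem hk)]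

lemma multilinear_le_of_forall_notMem_eq_zero (hv : Monotone v) {x : G → ℝ}
    (hx : ∀ j, 0 ≤ x j ∧ x j ≤ 1) {S : Finset G} (hxS : ∀ j ∉ S, x j = 0) :
    multilinear v x ≤ v S := by
  rw [← multilinear_indVec v S]
  refine multilinear_mono hv hx (indVec_nonneg_le_one S) fun j => ?_
  by_cases hj : j ∈ S <;> simp [indVec, hj, hxS, hx j]

lemma multilinear_le_add_indVec (hv : Monotone v) {x : G → ℝ} (hx : ∀ j, 0 ≤ x j ∧ x j ≤ 1)
    {S : Finset G} (hxS : ∀ k ∈ S, x k = 0) : multilinear v x ≤ multilinear v (x + indVec S) :=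
  multilinear_mono hv hx (add_indVec_nonneg_le_one hx hxS) fun j =>
    le_add_of_nonneg_right (indVec_nonneg_le_one S j).1

lemma multilinear_add_indVec_le_add_sum (hv₀ : ∀ S, 0 ≤ v S) (hmono : Monotone v)
    (hsub : Submodular v) {S : Finset G} {y z : G → ℝ} (hy : ∀ j, 0 ≤ y j ∧ y j ≤ 1)
    (hyS : ∀ k ∈ S, y k = 0) (hz : ∀ j, 0 ≤ z j ∧ z j ≤ 1) (hzS : ∀ k ∈ S, z k = 0) :
    multilinear v (z + indVec S) ≤ multilinear v z + ∑ k ∈ S, multilinear v (y + indVec {k}) := by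
  rw [add_indVec_eq_piecewise hzS]
  refine (multilinear_piecewise_one_le hsub hz hzS).trans ?_
  gcongr with k hk
  have hyk : ∀ j ∈ ({k} : Finset G), y j = 0 := by simpa using hyS k hk
  have hk_le : v {k} ≤ multilinear v (y + indVec {k}) := by
    rw [← multilinear_indVec v {k}]
    exact multilinear_mono hmono (indVec_nonneg_le_one _) (add_indVec_nonneg_le_one hy hyk)
      fun j => le_add_of_nonneg_left (hy j).1
  linarith [hv₀ ∅]

/-- The coefficient `b_i` above, set to zero for agents outside `A'`. -/
noncomputable def approxRatio (v : Finset G → ℝ) (H : Finset G) (z y : G → ℝ) : ℝ :=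
  if 0 < v Hᶜ then multilinear v z / multilinear v y else 0

variable {H : Finset G} {y z : G → ℝ}

lemma approxRatio_nonneg (hv : ∀ S, 0 ≤ v S) (hz : ∀ j, 0 ≤ z j ∧ z j ≤ 1)
    (hy : 0 < v Hᶜ → 0 < multilinear v y) : 0 ≤ approxRatio v H z y := by
  unfold approxRatio
  split_ifs with h
  exacts [div_nonneg (multilinear_nonneg hv hz) (hy h).le, le_rfl]

lemma multilinear_le_approxRatio_mul (hv : Monotone v) (hz : ∀ j, 0 ≤ z j ∧ z j ≤ 1)
    (hzH : ∀ j ∈ H, z j = 0) (hy : 0 < v Hᶜ → 0 < multilinear v y) :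
    multilinear v z ≤ approxRatio v H z y * multilinear v y := by
  unfold approxRatio
  split_ifs with h
  · rw [div_mul_cancel₀ _ (hy h).ne']
  · rw [zero_mul]
    exact (multilinear_le_of_forall_notMem_eq_zero hv hz fun j hj =>
      hzH j (by simpa using hj)).trans (not_lt.1 h)

end MultilinearExtension

section Matching

variable {ι : Type*} {s : Finset ι} {f : ι → ℝ} {X b m : ℝ}

lemma le_div_mul_of_le_mul_add_sum (hb : 0 ≤ b) (hX : X ≤ b * m + ∑ k ∈ s, f k) :
    X ≤ X / (b + #s) * (b + #s) := by
  rcases eq_or_ne (b + #s) 0 with hd | hd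
  · have hb0 : b = 0 := by linarith [(#s).cast_nonneg (α := ℝ)]
    have hs : s = ∅ := card_eq_zero.1 (by exact_mod_cast (show (#s : ℝ) = 0 by linarith))
    simpa [hb0, hs] using hX
  · rw [div_mul_cancel₀ _ hd]

lemma div_le_of_le_mul_add_sum (hb : 0 ≤ b) (hm : 0 ≤ m) (hX : X ≤ b * m + ∑ k ∈ s, f k)
    (hf : ∀ k ∈ s, f k < X / (b + #s)) : X / (b + #s) ≤ m := by
  set c := X / (b + #s)
  rcases eq_or_ne (b + #s) 0 with hd | hd
  · simpa [c, hd] using hm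
  have hXc : X = c * (b + #s) := (div_mul_cancel₀ _ hd).symm
  have hsum : ∑ k ∈ s, f k ≤ #s * c := by
    simpa using sum_le_sum fun k hk => (hf k hk).le
  rcases hb.eq_or_lt with rfl | hbpos
  · have hs : s.Nonempty := nonempty_iff_ne_empty.2 fun h => hd (by simp [h])
    have := sum_lt_sum_of_nonempty hs hf
    simp only [sum_const, nsmul_eq_mul] at this
    simp only [zero_mul, zero_add] at hX hXc
    linarith
  · exact le_of_mul_le_mul_right (by nlinarith) hbpos

theorem exists_injective_of_forall_exists_mem_or_forall {A G : Type*} [Fintype A] [DecidableEq G]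
    {H : Finset G} (hH : Fintype.card A ≤ #H) {T : A → Finset G} (hT : Pairwise (Disjoint on T))
    (hTH : ∀ i, T i ⊆ H) (p : A → G → Prop) (hp : ∀ i, (∃ k ∈ T i, p i k) ∨ ∀ j ∈ H, p i j) :
    ∃ π : A → G, Injective π ∧ ∀ i, π i ∈ H ∧ p i (π i) := by
  have hall : ∀ s : Finset A, #s ≤ #(s.biUnion fun i => H.filter (p i)) := by
    intro s
    by_cases hs : ∀ i ∈ s, ∃ k ∈ T i, p i k
    · calc #s ≤ #(s.biUnion fun i => (T i).filter (p i)) :=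
            card_le_card_biUnion (fun i _ j _ hij => (hT hij).mono (filter_subset _ _)
              (filter_subset _ _)) fun i hi => (hs i hi).imp fun k hk => mem_filter.2 hk
        _ ≤ _ := card_le_card (biUnion_mono fun i _ => filter_subset_filter _ (hTH i))
    · obtain ⟨i, hi, hno⟩ := not_forall₂.1 hs
      have hpi := (hp i).resolve_left hno
      calc #s ≤ Fintype.card A := card_le_univ s
        _ ≤ #H := hH
        _ ≤ _ := card_le_card fun j hj => mem_biUnion.2 ⟨i, hi, mem_filter.2 ⟨hj, hpi j hj⟩⟩
  obtain ⟨π, hπ, hπmem⟩ := (all_card_le_biUnion_card_iff_exists_injective _).1 hall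
  exact ⟨π, hπ, fun i => mem_filter.1 (hπmem i)⟩

theorem exists_injective_le_mul_of_le_mul_add_sum {A G : Type*} [Fintype A] [DecidableEq G]
    {H : Finset G} (hH : Fintype.card A ≤ #H) {T : A → Finset G} (hT : Pairwise (Disjoint on T))
    (hTH : ∀ i, T i ⊆ H) {X b m : A → ℝ} {f : A → G → ℝ} (hb : ∀ i, 0 ≤ b i)
    (hm : ∀ i, 0 ≤ m i) (hmf : ∀ i, ∀ j ∈ H, m i ≤ f i j)
    (hX : ∀ i, X i ≤ b i * m i + ∑ k ∈ T i, f i k) :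
    ∃ π : A → G, Injective π ∧ (∀ i, π i ∈ H) ∧ ∀ i, X i ≤ f i (π i) * (b i + #(T i)) := by
  obtain ⟨π, hπ, hπH⟩ := exists_injective_of_forall_exists_mem_or_forall hH hT hTH
    (fun i j => X i / (b i + #(T i)) ≤ f i j) fun i => or_iff_not_imp_left.2 fun h j hj => by
      push Not at h
      exact (div_le_of_le_mul_add_sum (hb i) (hm i) (hX i) h).trans (hmf i j hj)
  refine ⟨π, hπ, fun i => (hπH i).1, fun i => (le_div_mul_of_le_mul_add_sum (hb i) (hX i)).trans ?_⟩
  exact mul_le_mul_of_nonneg_right (hπH i).2 (add_nonneg (hb i) (Nat.cast_nonneg _))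

end Matching

section GeometricMean

variable {ι : Type*} [Fintype ι] {d : ι → ℝ} {M : ℝ}

lemma sum_le_card_mul_of_mean_le (h : 1 / (Fintype.card ι : ℝ) * ∑ i, d i ≤ M) :
    ∑ i, d i ≤ Fintype.card ι * M := by
  rcases isEmpty_or_nonempty ι with hι | hι
  · simp
  · rwa [one_div, inv_mul_le_iff₀ (by exact_mod_cast Fintype.card_pos)] at h

lemma prod_rpow_one_div_card_le (hM : 1 ≤ M) (hd : ∀ i, 0 ≤ d i)
    (hsum : ∑ i, d i ≤ Fintype.card ι * M) : (∏ i, d i) ^ ((1 : ℝ) / Fintype.card ι) ≤ M := by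
  rcases isEmpty_or_nonempty ι with hι | hι
  · simpa using hM
  have hn : (0 : ℝ) < Fintype.card ι := by exact_mod_cast Fintype.card_pos
  have hamgm := Real.geom_mean_le_arith_mean univ (fun _ => 1) d (fun _ _ => zero_le_one)
    (by simpa using hn) fun i _ => hd i
  simp only [Real.rpow_one, one_mul, sum_const, card_univ, nsmul_eq_mul, mul_one] at hamgm
  rw [one_div]
  exact hamgm.trans ((div_le_iff₀ hn).2 (by linarith))

lemma prod_rpow_one_div_card_le_mul {X F : ι → ℝ} (hM : 1 ≤ M) (hX : ∀ i, 0 ≤ X i)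
    (hF : ∀ i, 0 ≤ F i) (hd : ∀ i, 0 ≤ d i) (hXFd : ∀ i, X i ≤ F i * d i)
    (hsum : ∑ i, d i ≤ Fintype.card ι * M) :
    (∏ i, X i) ^ ((1 : ℝ) / Fintype.card ι) ≤ M * (∏ i, F i) ^ ((1 : ℝ) / Fintype.card ι) := by
  have hw : (0 : ℝ) ≤ 1 / Fintype.card ι := by positivity
  have hF' : 0 ≤ ∏ i, F i := prod_nonneg fun i _ => hF i
  calc (∏ i, X i) ^ ((1 : ℝ) / Fintype.card ι)
      ≤ (∏ i, F i * d i) ^ ((1 : ℝ) / Fintype.card ι) :=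
        Real.rpow_le_rpow (prod_nonneg fun i _ => hX i)
          (prod_le_prod (fun i _ => hX i) fun i _ => hXFd i) hw
    _ = (∏ i, F i) ^ ((1 : ℝ) / Fintype.card ι) * (∏ i, d i) ^ ((1 : ℝ) / Fintype.card ι) := by
        rw [prod_mul_distrib, Real.mul_rpow hF' (prod_nonneg fun i _ => hd i)]
    _ ≤ (∏ i, F i) ^ ((1 : ℝ) / Fintype.card ι) * M :=
        mul_le_mul_of_nonneg_left (prod_rpow_one_div_card_le hM hd hsum) (Real.rpow_nonneg hF' _)
    _ = M * (∏ i, F i) ^ ((1 : ℝ) / Fintype.card ι) := mul_comm _ _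

end GeometricMean

theorem matching_extension_general {A G : Type*} [Fintype A] [Fintype G]
    [DecidableEq G] (v : A → Finset G → ℝ)
    (hnn : ∀ i S, 0 ≤ v i S) (hmono : ∀ i, Monotone (v i)) (hsub : ∀ i, Submodular (v i))
    (H : Finset G) (hH : H.card = Fintype.card A)
    (Hstar : A → Finset G)
    (hdisj : ∀ i i', i ≠ i' → Disjoint (Hstar i) (Hstar i'))
    (hcover : Finset.univ.biUnion Hstar = H)
    (ystar : A → G → ℝ) (hystar01 : ∀ i j, 0 ≤ ystar i j ∧ ystar i j ≤ 1)
    (hystarH : ∀ i, ∀ j ∈ H, ystar i j = 0)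
    (β : ℝ)
    (y' : A → G → ℝ) (hy'01 : ∀ i j, 0 ≤ y' i j ∧ y' i j ≤ 1)
    (hy'H : ∀ i, ∀ j ∈ H, y' i j = 0)
    (hy'pos : ∀ i, 0 < v i Hᶜ → 0 < multilinear (v i) (y' i))
    (hratio : (1 / (Fintype.card A : ℝ)) *
        ∑ i ∈ Finset.univ.filter (fun i => 0 < v i Hᶜ),
          multilinear (v i) (ystar i) / multilinear (v i) (y' i) ≤ β) :
    ∃ π : A → G, Function.Injective π ∧ (∀ i, π i ∈ H) ∧
      (∏ i : A, multilinear (v i) (y' i + indVec {π i})) ^ ((1 : ℝ) / Fintype.card A)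
        ≥ (1 / (β + 1)) *
          (∏ i : A, multilinear (v i) (ystar i + indVec (Hstar i))) ^ ((1 : ℝ) / Fintype.card A) := by
  have hHstarH : ∀ i, Hstar i ⊆ H := fun i => hcover ▸ subset_biUnion_of_mem Hstar (mem_univ i)
  set b : A → ℝ := fun i => approxRatio (v i) H (ystar i) (y' i)
  have hb : ∀ i, 0 ≤ b i := fun i => approxRatio_nonneg (hnn i) (hystar01 i) (hy'pos i)
  replace hratio : 1 / (Fintype.card A : ℝ) * ∑ i, b i ≤ β := by rwa [sum_filter] at hratio
  have hβ : 0 ≤ β := (mul_nonneg (by positivity) (sum_nonneg fun i _ => hb i)).trans hratio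
  have hsum_card : ∑ i, (#(Hstar i) : ℝ) = Fintype.card A := by
    rw [← Nat.cast_sum, ← card_biUnion fun i _ j _ hij => hdisj i j hij, hcover, hH]
  obtain ⟨π, hπ, hπH, hπle⟩ := exists_injective_le_mul_of_le_mul_add_sum hH.ge hdisj hHstarH
    (X := fun i => multilinear (v i) (ystar i + indVec (Hstar i)))
    (f := fun i j => multilinear (v i) (y' i + indVec {j})) hb
    (fun i => multilinear_nonneg (hnn i) (hy'01 i))
    (fun i j hj => multilinear_le_add_indVec (hmono i) (hy'01 i) (by simpa using hy'H i j hj))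
    fun i => (multilinear_add_indVec_le_add_sum (hnn i) (hmono i) (hsub i) (hy'01 i)
      (fun k hk => hy'H i k (hHstarH i hk)) (hystar01 i)
      (fun k hk => hystarH i k (hHstarH i hk))).trans <| by
        linarith [multilinear_le_approxRatio_mul (hmono i) (hystar01 i) (hystarH i) (hy'pos i)]
  refine ⟨π, hπ, hπH, ?_⟩
  rw [ge_iff_le, one_div_mul_eq_div, div_le_iff₀' (by linarith)]
  exact prod_rpow_one_div_card_le_mul (by linarith)
    (fun i => multilinear_nonneg (hnn i) (add_indVec_nonneg_le_one (hystar01 i)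
      fun k hk => hystarH i k (hHstarH i hk)))
    (fun i => multilinear_nonneg (hnn i) (add_indVec_nonneg_le_one (hy'01 i)
      (by simpa using hy'H i (π i) (hπH i))))
    (fun i => add_nonneg (hb i) (Nat.cast_nonneg _)) hπle
    (by rw [sum_add_distrib, hsum_card]; linarith [sum_le_card_mul_of_mean_le hratio])

/-- matching extension: if the fractional solution `y'` approximates `y*`
in the sense `(1/n) ∑_{i∈A'} V_i(y*_i)/V_i(y'_i) ≤ β`, then there exists a matching
`π : A → H` with `(∏_i V_i(y'_i + 1_{π(i)}))^{1/n} ≥ (∏_i V_i(x*_i))^{1/n} / (β+1)`. -/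
theorem matching_extension {A G : Type*} [Fintype A] [Fintype G] [DecidableEq A]
    [DecidableEq G] (v : A → Finset G → ℝ)
    (hnn : ∀ i S, 0 ≤ v i S) (hmono : ∀ i, Monotone (v i)) (hsub : ∀ i, Submodular (v i))
    (hempty : ∀ i, v i ∅ = 0)
    (H : Finset G) (hH : H.card = Fintype.card A)
    (Hstar : A → Finset G)
    (hdisj : ∀ i i', i ≠ i' → Disjoint (Hstar i) (Hstar i'))
    (hcover : Finset.univ.biUnion Hstar = H)
    (ystar : A → G → ℝ) (hystar01 : ∀ i j, 0 ≤ ystar i j ∧ ystar i j ≤ 1)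
    (hystarH : ∀ i, ∀ j ∈ H, ystar i j = 0)
    (hystarfeas : ∀ j ∉ H, ∑ i : A, ystar i j ≤ 1)
    (β : ℝ) (hβ : 0 < β)
    (y' : A → G → ℝ) (hy'01 : ∀ i j, 0 ≤ y' i j ∧ y' i j ≤ 1)
    (hy'H : ∀ i, ∀ j ∈ H, y' i j = 0)
    (hy'feas : ∀ j ∉ H, ∑ i : A, y' i j ≤ 1)
    (hy'zero : ∀ i, ¬ 0 < v i Hᶜ → y' i = 0)
    (hy'pos : ∀ i, 0 < v i Hᶜ → 0 < multilinear (v i) (y' i))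
    (hratio : (1 / (Fintype.card A : ℝ)) *
        ∑ i ∈ Finset.univ.filter (fun i => 0 < v i Hᶜ),
          multilinear (v i) (ystar i) / multilinear (v i) (y' i) ≤ β) :
    ∃ π : A → G, Function.Injective π ∧ (∀ i, π i ∈ H) ∧
      (∏ i : A, multilinear (v i) (y' i + indVec {π i})) ^ ((1 : ℝ) / Fintype.card A)
        ≥ (1 / (β + 1)) *
          (∏ i : A, multilinear (v i) (ystar i + indVec (Hstar i))) ^ ((1 : ℝ) / Fintype.card A) :=
  matching_extension_general v hnn hmono hsub H hH Hstar hdisj hcover ystar hystar01 hystarH β y'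
    hy'01 hy'H hy'pos hratio
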